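/- Let (X,f) be a dynamical system. If there exist a positive integer m and a closed f^m-invariant subset Y of X such that (Y, f^m) admits a factor map onto the full shift ({0,1}^ℕ, σ), then Y contains a point that is non-wandering for f but not recurrent for f. -/

import Mathlib

open Set Function

variable {X : Type*}

/-- A `δ`-pseudo-orbit of `f`. -/
def IsPseudoOrbit [MetricSpace X] (f : X → X) (δ : ℝ) (x : ℕ → X) : Prop :=
  ∀ n : ℕ, dist (f (x n)) (x (n + 1)) < δ

/-- `z` ε-traces the sequence `x`. -/
def Traces [MetricSpace X] (f : X → X) (ε : ℝ) (z : X) (x : ℕ → X) : Prop :=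
  ∀ n : ℕ, dist (f^[n] z) (x n) < ε

/-- The shadowing property. -/
def HasShadowing [MetricSpace X] (f : X → X) : Prop :=
  ∀ ε > (0 : ℝ), ∃ δ > (0 : ℝ), ∀ x : ℕ → X, IsPseudoOrbit f δ x → ∃ z : X, Traces f ε z x

/-- The shadowing property of the restriction of `f` to an invariant set `S`. -/
def HasShadowingOn [MetricSpace X] (f : X → X) (S : Set X) : Prop :=
  ∀ ε > (0 : ℝ), ∃ δ > (0 : ℝ), ∀ x : ℕ → X, (∀ n, x n ∈ S) → IsPseudoOrbit f δ x →
    ∃ z ∈ S, Traces f ε z x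

/-- Non-wandering point. -/
def NonWanderingPt [TopologicalSpace X] (f : X → X) (x : X) : Prop :=
  ∀ U ∈ nhds x, ∃ k : ℕ, 1 ≤ k ∧ ∃ y ∈ U, f^[k] y ∈ U

/-- The (forward) orbit of a point. -/
def orbitSet (f : X → X) (x : X) : Set X := Set.range fun n : ℕ => f^[n] x

/-- Recurrent point. -/
def RecurrentPt [TopologicalSpace X] (f : X → X) (x : X) : Prop :=
  ∀ U ∈ nhds x, ∃ k : ℕ, 1 ≤ k ∧ f^[k] x ∈ U

/-- Minimal point: every point of the orbit closure has `x` in its own orbit closure,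
i.e. the orbit closure of `x` is a minimal set. -/
def MinimalPt [TopologicalSpace X] (f : X → X) (x : X) : Prop :=
  ∀ y ∈ closure (orbitSet f x), x ∈ closure (orbitSet f y)

/-- Regularly recurrent point. -/
def RegRecPt [TopologicalSpace X] (f : X → X) (x : X) : Prop :=
  ∀ U ∈ nhds x, ∃ k : ℕ, 1 ≤ k ∧ ∀ n : ℕ, f^[k * n] x ∈ U

/-- Equicontinuity of the family of iterates of `f`. -/
def EquicontinuousMap [MetricSpace X] (f : X → X) : Prop :=
  ∀ ε > (0 : ℝ), ∃ δ > (0 : ℝ), ∀ x y : X, dist x y < δ →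
    ∀ n : ℕ, dist (f^[n] x) (f^[n] y) < ε

/-- `u` is a sensitive point of the subsystem on `S`. -/
def SensitivePtOn [MetricSpace X] (f : X → X) (S : Set X) (u : X) : Prop :=
  ∃ δ > (0 : ℝ), ∀ U ∈ nhds u, ∃ n : ℕ, ∃ a ∈ U ∩ S, ∃ b ∈ U ∩ S,
    dist (f^[n] a) (f^[n] b) > δ

/-- `u` is a sensitive point of `(X,f)`. -/
def SensitivePt [MetricSpace X] (f : X → X) (u : X) : Prop :=
  ∃ δ > (0 : ℝ), ∀ U ∈ nhds u, ∃ n : ℕ, ∃ a ∈ U, ∃ b ∈ U,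
    dist (f^[n] a) (f^[n] b) > δ

/-- Topological transitivity. -/
def TopTransitive {Y : Type*} [TopologicalSpace Y] (g : Y → Y) : Prop :=
  ∀ U V : Set Y, IsOpen U → U.Nonempty → IsOpen V → V.Nonempty →
    ∃ n : ℕ, 1 ≤ n ∧ (g^[n] '' U ∩ V).Nonempty

/-- Weak mixing: the product system is transitive. -/
def WeaklyMixing [TopologicalSpace X] (f : X → X) : Prop :=
  TopTransitive (fun p : X × X => (f p.1, f p.2))

/-- Strong mixing. -/
def StronglyMixing {Y : Type*} [TopologicalSpace Y] (g : Y → Y) : Prop :=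
  ∀ U V : Set Y, IsOpen U → U.Nonempty → IsOpen V → V.Nonempty →
    ∃ N : ℕ, ∀ n ≥ N, (g^[n] '' U ∩ V).Nonempty

/-- The shift map on the full shift over `d` symbols. -/
def shiftMap (d : ℕ) : (ℕ → Fin d) → (ℕ → Fin d) := fun x n => x (n + 1)

/-- `π` is a factor map from the subsystem `(Y, f^[m])` onto the full shift on `d` symbols. -/
def FactorOntoShift [TopologicalSpace X] (f : X → X) (m : ℕ) (Y : Set X) (d : ℕ)
    (π : X → (ℕ → Fin d)) : Prop :=
  ContinuousOn π Y ∧ π '' Y = Set.univ ∧ ∀ y ∈ Y, π (f^[m] y) = shiftMap d (π y)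

/-!
Over each `n`-periodic word `(10…0)^∞` the compact fibre in `Y` is `f^(mn)`-invariant, so it
contains an ω-limit point of `f^(mn)`, which is non-wandering for `f^m`. These words converge to
`1000…`, and `π` maps the compact set of `f^m`-non-wandering points of `Y` onto a closed set, so
some such point `x` lies over `1000…`. Since `π` sends `f^m`-recurrent points to `σ`-recurrent
ones and `1000…` is not recurrent, `x` is not `f^m`-recurrent, hence not `f`-recurrent: among
`m + 1` times whose pairwise differences are all return times of an `f`-recurrent point into a
neighbourhood, two differ by a multiple of `m`.
-/

open Filter Topology

section NonWandering

variable [TopologicalSpace X] {g : X → X}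

theorem NonWanderingPt.of_iterate {n : ℕ} {z : X} (hn : 0 < n) (h : NonWanderingPt g^[n] z) :
    NonWanderingPt g z := by
  intro U hU
  obtain ⟨k, hk, y, hy, hky⟩ := h U hU
  exact ⟨n * k, Nat.mul_pos hn hk, y, hy, by rwa [iterate_mul]⟩

theorem NonWanderingPt.of_mapClusterPt {y z : X}
    (h : MapClusterPt z atTop fun n => g^[n] y) : NonWanderingPt g z := by
  intro U hU
  have hfreq := frequently_atTop.1 (mapClusterPt_iff_frequently.1 h U hU)
  obtain ⟨a, -, ha⟩ := hfreq 0
  obtain ⟨b, hab, hb⟩ := hfreq (a + 1)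
  refine ⟨b - a, by omega, g^[a] y, ha, ?_⟩
  rwa [← iterate_add_apply, Nat.sub_add_cancel (by omega)]

theorem exists_nonWanderingPt_of_mapsTo {K : Set X} (hK : IsCompact K) (hne : K.Nonempty)
    (hg : MapsTo g K K) : ∃ z ∈ K, NonWanderingPt g z := by
  obtain ⟨y, hy⟩ := hne
  obtain ⟨z, hzK, hz⟩ := hK.exists_mapClusterPt (f := atTop) (u := fun n => g^[n] y)
    (tendsto_principal.2 (Eventually.of_forall fun n => hg.iterate n hy))
  exact ⟨z, hzK, .of_mapClusterPt hz⟩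

theorem isClosed_setOf_nonWanderingPt (g : X → X) : IsClosed {x | NonWanderingPt g x} := by
  refine isClosed_of_closure_subset fun x hx U hU => ?_
  obtain ⟨V, hVU, hV, hxV⟩ := mem_nhds_iff.1 hU
  obtain ⟨z, hzV, hz⟩ := mem_closure_iff.1 hx V hV hxV
  obtain ⟨k, hk, y, hy, hky⟩ := hz V (hV.mem_nhds hzV)
  exact ⟨k, hk, y, hVU hy, hVU hky⟩

end NonWandering

section Recurrence

variable [TopologicalSpace X] {f : X → X} {x : X}

theorem RecurrentPt.exists_finset_iterate_sub_mem (hf : Continuous f) (hx : RecurrentPt f x)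
    {U : Set X} (hU : IsOpen U) (hxU : x ∈ U) (k : ℕ) :
    ∃ T : Finset ℕ, T.card = k ∧ ∀ a ∈ T, ∀ b ∈ T, a < b → f^[b - a] x ∈ U := by
  induction k with
  | zero => exact ⟨∅, rfl, by simp⟩
  | succ k ih =>
    obtain ⟨T, hcard, hT⟩ := ih
    set M := T.sup id
    have hle : ∀ a ∈ T, a ≤ M := fun a ha => Finset.le_sup (f := id) ha
    have hxV : x ∈ ⋂ a ∈ T, f^[M - a] ⁻¹' U := by
      refine mem_iInter₂.2 fun a ha => ?_
      obtain ⟨b, hb, hbM : b = M⟩ := Finset.sup_mem_of_nonempty (f := id) ⟨a, ha⟩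
      rcases (hle a ha).eq_or_lt with h | h
      · rwa [h, Nat.sub_self]
      · rw [mem_preimage, ← hbM]
        exact hT a ha b hb (hbM ▸ h)
    obtain ⟨n, hn, hnV⟩ := hx _ ((isOpen_biInter_finset fun a _ =>
      hU.preimage (hf.iterate _)).mem_nhds hxV)
    have hlt : ∀ a ∈ T, a < M + n := fun a ha => by have := hle a ha; omega
    refine ⟨insert (M + n) T, by rw [Finset.card_insert_of_notMem fun h => (hlt _ h).false,
      hcard], ?_⟩
    simp only [Finset.mem_insert]
    rintro a (rfl | ha) b (rfl | hb) hab
    · exact absurd hab (lt_irrefl _)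
    · exact absurd (hlt b hb) (not_lt.2 hab.le)
    · rw [show M + n - a = M - a + n by have := hle a ha; omega, iterate_add_apply]
      exact mem_iInter₂.1 hnV a ha
    · exact hT a ha b hb hab

theorem RecurrentPt.iterate (hf : Continuous f) (hx : RecurrentPt f x) {m : ℕ} (hm : 0 < m) :
    RecurrentPt f^[m] x := by
  intro U hU
  obtain ⟨V, hVU, hV, hxV⟩ := mem_nhds_iff.1 hU
  obtain ⟨T, hcard, hT⟩ := hx.exists_finset_iterate_sub_mem hf hV hxV (m + 1)
  obtain ⟨a, ha, b, hb, hne, hmod⟩ := Finset.exists_ne_map_eq_of_card_lt_of_maps_to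
    (s := T) (t := Finset.range m) (f := (· % m)) (by simp [hcard])
    fun a _ => Finset.mem_range.2 (Nat.mod_lt a hm)
  wlog hab : a < b generalizing a b
  · exact this b hb a ha hne.symm hmod.symm (lt_of_le_of_ne (not_lt.1 hab) hne.symm)
  obtain ⟨q, hq⟩ := (Nat.modEq_iff_dvd' hab.le).1 hmod
  refine ⟨q, Nat.pos_of_ne_zero ?_, hVU ?_⟩
  · rintro rfl
    omega
  · rw [← iterate_mul, ← hq]
    exact hT a ha b hb hab

end Recurrence

theorem shiftMap_iterate_apply {d : ℕ} (k : ℕ) (s : ℕ → Fin d) (i : ℕ) :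
    (shiftMap d)^[k] s i = s (i + k) := by
  induction k generalizing i with
  | zero => rfl
  | succ k ih => rw [iterate_succ_apply', shiftMap, ih, Nat.add_right_comm]; rfl

def periodicOnes (n : ℕ) : ℕ → Fin 2 := fun i => if n ∣ i then 1 else 0

theorem shiftMap_iterate_periodicOnes (n : ℕ) :
    (shiftMap 2)^[n] (periodicOnes n) = periodicOnes n := by
  funext i
  simp [shiftMap_iterate_apply, periodicOnes]

theorem tendsto_periodicOnes : Tendsto periodicOnes atTop (𝓝 (Pi.single 0 1)) := by
  refine tendsto_pi_nhds.2 fun i => tendsto_const_nhds.congr' ?_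
  filter_upwards [eventually_gt_atTop i] with n hn
  rcases Nat.eq_zero_or_pos i with rfl | hi
  · simp [periodicOnes]
  · have : ¬ n ∣ i := fun h => (Nat.le_of_dvd hi h).not_gt hn
    simp [periodicOnes, this, hi.ne']

theorem not_recurrentPt_shiftMap_single : ¬ RecurrentPt (shiftMap 2) (Pi.single 0 1) := by
  intro h
  obtain ⟨k, hk, hkU⟩ := h {s | s 0 = 1}
    (((isOpen_discrete {1}).preimage (continuous_apply 0)).mem_nhds (by simp))
  simp [shiftMap_iterate_apply, Pi.single_apply] at hkU
  omega

namespace FactorOntoShift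

variable [TopologicalSpace X] {f : X → X} {m d : ℕ} {Y : Set X} {π : X → (ℕ → Fin d)}

theorem iterate_apply (hπ : FactorOntoShift f m Y d π) (hY : MapsTo f^[m] Y Y) (k : ℕ)
    {y : X} (hy : y ∈ Y) : π ((f^[m])^[k] y) = (shiftMap d)^[k] (π y) := by
  induction k generalizing y with
  | zero => rfl
  | succ k ih => rw [iterate_succ_apply, ih (hY hy), hπ.2.2 y hy, ← iterate_succ_apply]

theorem recurrentPt_apply (hπ : FactorOntoShift f m Y d π) (hY : MapsTo f^[m] Y Y) {x : X}
    (hx : x ∈ Y) (hrec : RecurrentPt f^[m] x) : RecurrentPt (shiftMap d) (π x) := by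
  intro U hU
  obtain ⟨V, hV, hVU⟩ := mem_nhdsWithin_iff_exists_mem_nhds_inter.1 (hπ.1 x hx hU)
  obtain ⟨k, hk, hkV⟩ := hrec V hV
  exact ⟨k, hk, hπ.iterate_apply hY k hx ▸ hVU ⟨hkV, hY.iterate k hx⟩⟩

theorem exists_nonWanderingPt_apply_eq [CompactSpace X] (hπ : FactorOntoShift f m Y d π)
    (hYc : IsClosed Y) (hY : MapsTo f^[m] Y Y) {n : ℕ} (hn : 0 < n) {s : ℕ → Fin d}
    (hs : (shiftMap d)^[n] s = s) : ∃ z ∈ Y, NonWanderingPt f^[m] z ∧ π z = s := by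
  obtain ⟨y, hy, rfl⟩ : s ∈ π '' Y := hπ.2.1 ▸ mem_univ s
  set K := Y ∩ π ⁻¹' {π y}
  have hK : IsClosed K := hπ.1.preimage_isClosed_of_isClosed hYc isClosed_singleton
  have hmaps : MapsTo (f^[m])^[n] K K := fun z ⟨hz, hzy⟩ =>
    ⟨hY.iterate n hz, by simp [hπ.iterate_apply hY n hz, mem_singleton_iff.1 hzy, hs]⟩
  obtain ⟨z, ⟨hzY, hzy⟩, hz⟩ :=
    exists_nonWanderingPt_of_mapsTo hK.isCompact ⟨y, hy, rfl⟩ hmaps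
  exact ⟨z, hzY, hz.of_iterate hn, hzy⟩

end FactorOntoShift

theorem shift_factor_gives_nonwandering_nonrecurrent [MetricSpace X] [CompactSpace X]
    (f : X → X) (hf : Continuous f) (m : ℕ) (hm : 1 ≤ m)
    (Y : Set X) (hYc : IsClosed Y) (hYinv : Set.MapsTo f^[m] Y Y)
    (π : X → (ℕ → Fin 2)) (hπ : FactorOntoShift f m Y 2 π) :
    ∃ x ∈ Y, NonWanderingPt f x ∧ ¬ RecurrentPt f x := by
  set W := Y ∩ {x | NonWanderingPt f^[m] x}
  have hWc : IsCompact (π '' W) :=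
    (hYc.inter (isClosed_setOf_nonWanderingPt _)).isCompact.image_of_continuousOn
      (hπ.1.mono inter_subset_left)
  have hperiodic : ∀ n ≥ 1, periodicOnes n ∈ π '' W := fun n hn => by
    obtain ⟨z, hzY, hz, hzπ⟩ := hπ.exists_nonWanderingPt_apply_eq hYc hYinv hn
      (shiftMap_iterate_periodicOnes n)
    exact ⟨z, ⟨hzY, hz⟩, hzπ⟩
  obtain ⟨x, ⟨hxY, hxW⟩, hxπ⟩ := hWc.isClosed.mem_of_tendsto tendsto_periodicOnes
    (eventually_atTop.2 ⟨1, hperiodic⟩)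
  refine ⟨x, hxY, hxW.of_iterate hm, fun hrec => not_recurrentPt_shiftMap_single ?_⟩
  exact hxπ ▸ hπ.recurrentPt_apply hYinv hxY (hrec.iterate hf hm)
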